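/- The Minkowski question-mark function is strictly monotone increasing on [0,1]: if x < y then ?(x) < ?(y). -/

import Mathlib

/-- The `k`-th partial quotient (continued fraction digit) `a_{k+1}` of `x`,
obtained from Mathlib's continued fraction algorithm; `0` if the expansion
has terminated. -/
noncomputable def cfDigit (x : ℝ) (k : ℕ) : ℕ :=
  (((GenContFract.of x).partDens.get? k).map fun r => (⌊r⌋).toNat).getD 0

/-- The Minkowski question-mark function, defined by
`?([a₀; a₁, a₂, …]) = a₀ + 2 ∑_{k≥1} (-1)^{k+1} / 2^{a₁+⋯+a_k}`,
where terms beyond the termination of a finite continued fraction are `0`. -/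
noncomputable def minkowski (x : ℝ) : ℝ :=
  (⌊x⌋ : ℝ) + ∑' k : ℕ,
    if ((GenContFract.of x).partDens.get? k).isSome then
      2 * (-1 : ℝ) ^ k / 2 ^ (∑ i ∈ Finset.range (k + 1), cfDigit x i)
    else 0

/-!
For `x ∈ (0, 1)` with first digit `a`, stripping that digit gives the functional equation
`?(x) = (2 - ?(T x)) / 2 ^ a` for the Gauss map `T x = {1/x}`, and the alternating series
with antitone moduli gives `0 ≤ ? ≤ 1` on `[0, 1)`, which the functional equation sharpens
to `? < 1`. Hence `?` sends the points with first digit `a` into `(2⁻ᵃ, 2¹⁻ᵃ]`, intervals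
that move left as `a` grows, while `T` reverses the order of points sharing their first
digit. Induction on the first index where the digits of `x < y` differ gives `?(x) < ?(y)`,
and points of `[0, 1)` with the same digits coincide since the convergents determine them.
-/

open GenContFract Set

theorem GenContFract.of_s_fract {K : Type*} [Field K] [LinearOrder K] [IsStrictOrderedRing K]
    [FloorRing K] (v : K) : (GenContFract.of (Int.fract v)).s = (GenContFract.of v).s := by
  rcases eq_or_ne (Int.fract v) 0 with h | h
  · obtain ⟨a, rfl⟩ : ∃ a : ℤ, v = a := ⟨⌊v⌋, eq_of_sub_eq_zero h⟩
    rw [h, ← Int.cast_zero, of_s_of_int, of_s_of_int]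
  refine Stream'.Seq.ext fun n => ?_
  cases n with
  | zero =>
    have h' : Int.fract (Int.fract v) ≠ 0 := by rwa [Int.fract_fract]
    have head_fract := of_s_head h'
    rw [Int.fract_fract] at head_fract
    exact head_fract.trans (of_s_head h).symm
  | succ n => rw [of_s_succ, of_s_succ, Int.fract_fract]

noncomputable def gaussMap (x : ℝ) : ℝ := Int.fract x⁻¹

lemma gaussMap_mem_Ico (x : ℝ) : gaussMap x ∈ Ico 0 1 :=
  ⟨Int.fract_nonneg _, Int.fract_lt_one _⟩

lemma cfDigit_fract (x : ℝ) : cfDigit (Int.fract x) = cfDigit x := by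
  funext n
  unfold cfDigit GenContFract.partDens
  rw [of_s_fract]

lemma cfDigit_succ (x : ℝ) (n : ℕ) : cfDigit x (n + 1) = cfDigit (gaussMap (Int.fract x)) n := by
  rw [gaussMap, cfDigit_fract]
  unfold cfDigit GenContFract.partDens
  rw [Stream'.Seq.map_get?, Stream'.Seq.map_get?, of_s_succ]

lemma cfDigit_intCast (a : ℤ) (n : ℕ) : cfDigit a n = 0 := by
  simp [cfDigit, GenContFract.partDens, of_s_of_int]

lemma partDens_get?_eq_ite (x : ℝ) (n : ℕ) :
    (GenContFract.of x).partDens.get? n =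
      if cfDigit x n = 0 then none else some (cfDigit x n : ℝ) := by
  rcases h : (GenContFract.of x).partDens.get? n with _ | b
  · simp [cfDigit, h]
  · obtain ⟨z, rfl⟩ := exists_int_eq_of_partDen h
    have hz : 1 ≤ z := by exact_mod_cast of_one_le_get?_partDen h
    have hd : cfDigit x n = z.toNat := by simp [cfDigit, h]
    rw [hd, if_neg (by omega)]
    have hcast : ((z.toNat : ℤ) : ℝ) = z := by rw [Int.toNat_of_nonneg (by omega)]
    rw [← hcast, Int.cast_natCast]

lemma cfDigit_eq_zero_iff {x : ℝ} {n : ℕ} :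
    cfDigit x n = 0 ↔ (GenContFract.of x).TerminatedAt n := by
  rw [terminatedAt_iff_partDen_none, partDens_get?_eq_ite]
  split_ifs with h <;> simp [h]

lemma cfDigit_eq_zero_of_le {x : ℝ} {k n : ℕ} (hkn : k ≤ n) (h : cfDigit x k = 0) :
    cfDigit x n = 0 :=
  cfDigit_eq_zero_iff.2 <| terminated_stable hkn <| cfDigit_eq_zero_iff.1 h

lemma cfDigit_zero_of_mem_Ioo {x : ℝ} (hx : x ∈ Ioo 0 1) : (cfDigit x 0 : ℤ) = ⌊x⁻¹⌋ := by
  have hfx : Int.fract x = x := Int.fract_eq_self.2 ⟨hx.1.le, hx.2⟩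
  have hs : (GenContFract.of x).s.get? 0 = some ⟨1, (⌊x⁻¹⌋ : ℝ)⟩ := by
    have head := of_s_head (v := x) (by rw [hfx]; exact hx.1.ne')
    rwa [hfx] at head
  have hfloor : 0 ≤ ⌊x⁻¹⌋ := Int.floor_nonneg.2 (inv_nonneg.2 hx.1.le)
  simp [cfDigit, partDen_eq_s_b hs, hfloor]

lemma of_s_get?_eq_map_partDens (x : ℝ) (n : ℕ) :
    (GenContFract.of x).s.get? n = ((GenContFract.of x).partDens.get? n).map (Pair.mk 1) := by
  rcases h : (GenContFract.of x).s.get? n with _ | ⟨a, b⟩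
  · simp [(partDen_none_iff_s_none).2 h]
  · obtain rfl := (of_partNum_eq_one_and_exists_int_partDen_eq h).1
    simp [partDen_eq_s_b h]

lemma eq_of_floor_eq_of_cfDigit_eq {x y : ℝ} (hfloor : ⌊x⌋ = ⌊y⌋)
    (hdigits : ∀ n, cfDigit x n = cfDigit y n) : x = y := by
  have hs : (GenContFract.of x).s = (GenContFract.of y).s := Stream'.Seq.ext fun n => by
    rw [of_s_get?_eq_map_partDens, of_s_get?_eq_map_partDens, partDens_get?_eq_ite,
      partDens_get?_eq_ite, hdigits]
  have hof : GenContFract.of x = GenContFract.of y :=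
    GenContFract.ext (by rw [of_h_eq_floor, of_h_eq_floor, hfloor]) hs
  exact tendsto_nhds_unique (hof ▸ GenContFract.of_convergence x) (GenContFract.of_convergence y)

lemma cfDigit_zero_pos {x : ℝ} (hx : x ∈ Ioo 0 1) : 0 < cfDigit x 0 := by
  have h : (0 : ℤ) < ⌊x⁻¹⌋ := Int.floor_pos.2 ((one_le_inv₀ hx.1).2 hx.2.le)
  rw [← cfDigit_zero_of_mem_Ioo hx] at h
  exact_mod_cast h

lemma cfDigit_zero_le_of_lt {x y : ℝ} (hx : x ∈ Ioo 0 1) (hy : y ∈ Ioo 0 1) (hxy : x < y) :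
    cfDigit y 0 ≤ cfDigit x 0 := by
  have h := Int.floor_le_floor (inv_anti₀ hx.1 hxy.le)
  rw [← cfDigit_zero_of_mem_Ioo hx, ← cfDigit_zero_of_mem_Ioo hy] at h
  exact_mod_cast h

noncomputable def minkowskiWeight (x : ℝ) (k : ℕ) : ℝ :=
  if cfDigit x k = 0 then 0 else 2 / 2 ^ (∑ i ∈ Finset.range (k + 1), cfDigit x i)

lemma minkowski_eq_floor_add_tsum (x : ℝ) :
    minkowski x = ⌊x⌋ + ∑' k, (-1) ^ k * minkowskiWeight x k := by
  unfold minkowski minkowskiWeight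
  congr 1
  refine tsum_congr fun k => ?_
  rw [partDens_get?_eq_ite]
  split_ifs <;> simp_all [mul_div_assoc, mul_comm]

lemma minkowskiWeight_nonneg (x : ℝ) (k : ℕ) : 0 ≤ minkowskiWeight x k := by
  unfold minkowskiWeight
  split_ifs <;> positivity

lemma minkowskiWeight_antitone (x : ℝ) : Antitone (minkowskiWeight x) := by
  refine antitone_nat_of_succ_le fun k => ?_
  by_cases hk : cfDigit x (k + 1) = 0
  · simpa [minkowskiWeight, hk] using minkowskiWeight_nonneg x k
  have hk' : cfDigit x k ≠ 0 := fun h => hk (cfDigit_eq_zero_of_le k.le_succ h)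
  rw [minkowskiWeight, minkowskiWeight, if_neg hk, if_neg hk', Finset.sum_range_succ _ (k + 1)]
  gcongr
  · exact one_le_two
  · exact Nat.le_add_right _ _

lemma minkowskiWeight_le (x : ℝ) (k : ℕ) : minkowskiWeight x k ≤ (1 / 2) ^ k := by
  unfold minkowskiWeight
  split_ifs with hk
  · positivity
  have hsum : k + 1 ≤ ∑ i ∈ Finset.range (k + 1), cfDigit x i := by
    have := Finset.card_nsmul_le_sum (Finset.range (k + 1)) (cfDigit x) 1 fun i hi =>
      Nat.one_le_iff_ne_zero.2 fun h =>
        hk (cfDigit_eq_zero_of_le (Nat.lt_succ_iff.1 (Finset.mem_range.1 hi)) h)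
    simpa using this
  calc (2 : ℝ) / 2 ^ (∑ i ∈ Finset.range (k + 1), cfDigit x i) ≤ 2 / 2 ^ (k + 1) := by
        gcongr
        exact one_le_two
    _ = (1 / 2) ^ k := by rw [one_div_pow, pow_succ]; field_simp

lemma summable_minkowskiWeight (x : ℝ) : Summable (minkowskiWeight x) :=
  (summable_geometric_of_lt_one (by norm_num) (by norm_num)).of_nonneg_of_le
    (minkowskiWeight_nonneg x) (minkowskiWeight_le x)

lemma minkowskiWeight_zero {x : ℝ} (hx : x ∈ Ioo 0 1) :
    minkowskiWeight x 0 = 2 / 2 ^ cfDigit x 0 := by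
  simp [minkowskiWeight, (cfDigit_zero_pos hx).ne']

lemma minkowskiWeight_succ {x : ℝ} (hx : x ∈ Ioo 0 1) (k : ℕ) :
    minkowskiWeight x (k + 1) = minkowskiWeight (gaussMap x) k / 2 ^ cfDigit x 0 := by
  have hfx : Int.fract x = x := Int.fract_eq_self.2 ⟨hx.1.le, hx.2⟩
  have hshift (i : ℕ) : cfDigit x (i + 1) = cfDigit (gaussMap x) i := by
    rw [cfDigit_succ, hfx]
  unfold minkowskiWeight
  rw [hshift, Finset.sum_range_succ' _ (k + 1)]
  simp only [hshift]
  split_ifs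
  · simp
  · rw [pow_add, div_div]

theorem Antitone.tsum_alternating_mem_Icc {f : ℕ → ℝ} (hfa : Antitone f) (hfs : Summable f) :
    ∑' i, (-1) ^ i * f i ∈ Icc 0 (f 0) := by
  have hlim := hfs.tendsto_alternating_series_tsum
  exact ⟨by simpa using hfa.alternating_series_le_tendsto hlim 0,
    by simpa using hfa.tendsto_le_alternating_series hlim 0⟩

lemma minkowski_intCast (a : ℤ) : minkowski a = a := by
  simp [minkowski_eq_floor_add_tsum, minkowskiWeight, cfDigit_intCast]

lemma minkowski_zero : minkowski 0 = 0 := by simpa using minkowski_intCast 0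

lemma minkowski_one : minkowski 1 = 1 := by simpa using minkowski_intCast 1

lemma minkowski_eq_tsum {x : ℝ} (hx : x ∈ Ico 0 1) :
    minkowski x = ∑' k, (-1) ^ k * minkowskiWeight x k := by
  rw [minkowski_eq_floor_add_tsum, Int.floor_eq_zero_iff.2 hx, Int.cast_zero, zero_add]

lemma minkowski_mem_Icc {x : ℝ} (hx : x ∈ Ico 0 1) : minkowski x ∈ Icc 0 1 := by
  rw [minkowski_eq_tsum hx]
  have h := (minkowskiWeight_antitone x).tsum_alternating_mem_Icc (summable_minkowskiWeight x)
  exact ⟨h.1, h.2.trans (by simpa using minkowskiWeight_le x 0)⟩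

lemma minkowski_eq_of_mem_Ioo {x : ℝ} (hx : x ∈ Ioo 0 1) :
    minkowski x = (2 - minkowski (gaussMap x)) / 2 ^ cfDigit x 0 := by
  rw [minkowski_eq_tsum ⟨hx.1.le, hx.2⟩, minkowski_eq_tsum (gaussMap_mem_Ico x),
    (summable_minkowskiWeight x).alternating.tsum_eq_zero_add, minkowskiWeight_zero hx]
  simp only [minkowskiWeight_succ hx, pow_succ, mul_neg_one, neg_mul, mul_div_assoc', tsum_neg,
    tsum_div_const]
  ring

lemma minkowski_pos {x : ℝ} (hx : x ∈ Ioo 0 1) : 0 < minkowski x := by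
  rw [minkowski_eq_of_mem_Ioo hx]
  have := (minkowski_mem_Icc (gaussMap_mem_Ico x)).2
  exact div_pos (by linarith) (by positivity)

lemma minkowski_lt_one {x : ℝ} (hx : x ∈ Ico 0 1) : minkowski x < 1 := by
  rcases hx.1.eq_or_lt with rfl | hx0
  · simp [minkowski_zero]
  have hx' : x ∈ Ioo 0 1 := ⟨hx0, hx.2⟩
  rw [minkowski_eq_of_mem_Ioo hx', div_lt_one (by positivity)]
  obtain h1 | h2 : cfDigit x 0 = 1 ∨ 2 ≤ cfDigit x 0 := by
    have := cfDigit_zero_pos hx'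
    omega
  · -- the digit `1` means `1 < 1/x < 2`, so the Gauss map does not hit `0`
    have hfloor : ⌊x⁻¹⌋ = 1 := by rw [← cfDigit_zero_of_mem_Ioo hx', h1, Nat.cast_one]
    have hT : gaussMap x ∈ Ioo 0 1 := by
      refine ⟨?_, (gaussMap_mem_Ico x).2⟩
      rw [gaussMap, Int.fract, hfloor, Int.cast_one, sub_pos]
      exact (one_lt_inv₀ hx0).2 hx.2
    rw [h1]
    linarith [minkowski_pos hT]
  · have h4 : (2 : ℝ) ^ 2 ≤ 2 ^ cfDigit x 0 := pow_le_pow_right₀ one_le_two h2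
    linarith [(minkowski_mem_Icc (gaussMap_mem_Ico x)).1]

lemma minkowski_mem_Ioc {x : ℝ} (hx : x ∈ Ioo 0 1) :
    minkowski x ∈ Ioc (1 / 2 ^ cfDigit x 0) (2 / 2 ^ cfDigit x 0) := by
  rw [minkowski_eq_of_mem_Ioo hx]
  have h0 := (minkowski_mem_Icc (gaussMap_mem_Ico x)).1
  have h1 := minkowski_lt_one (gaussMap_mem_Ico x)
  constructor <;> gcongr <;> linarith

lemma minkowski_lt_of_cfDigit_zero_ne {x y : ℝ} (hx : x ∈ Ico 0 1) (hy : y ∈ Ico 0 1)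
    (hxy : x < y) (hd : cfDigit x 0 ≠ cfDigit y 0) : minkowski x < minkowski y := by
  have hy' : y ∈ Ioo 0 1 := ⟨hx.1.trans_lt hxy, hy.2⟩
  rcases hx.1.eq_or_lt with rfl | hx0
  · simpa [minkowski_zero] using minkowski_pos hy'
  have hx' : x ∈ Ioo 0 1 := ⟨hx0, hxy.trans hy.2⟩
  have hlt : cfDigit y 0 + 1 ≤ cfDigit x 0 :=
    (cfDigit_zero_le_of_lt hx' hy' hxy).lt_of_ne hd.symm
  calc minkowski x ≤ 2 / 2 ^ cfDigit x 0 := (minkowski_mem_Ioc hx').2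
    _ ≤ 2 / 2 ^ (cfDigit y 0 + 1) := by gcongr; exact one_le_two
    _ = 1 / 2 ^ cfDigit y 0 := by rw [pow_succ]; field_simp
    _ < minkowski y := (minkowski_mem_Ioc hy').1

lemma minkowski_lt_of_cfDigit_ne (k : ℕ) {x y : ℝ} (hx : x ∈ Ico 0 1) (hy : y ∈ Ico 0 1)
    (hxy : x < y) (hd : cfDigit x k ≠ cfDigit y k) : minkowski x < minkowski y := by
  induction k generalizing x y with
  | zero => exact minkowski_lt_of_cfDigit_zero_ne hx hy hxy hd
  | succ k ih =>
    obtain h0 | h0 := ne_or_eq (cfDigit x 0) (cfDigit y 0)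
    · exact minkowski_lt_of_cfDigit_zero_ne hx hy hxy h0
    by_cases hz : cfDigit x 0 = 0
    · exact absurd ((cfDigit_eq_zero_of_le (Nat.zero_le _) hz).trans
        (cfDigit_eq_zero_of_le (Nat.zero_le _) (h0 ▸ hz)).symm) hd
    have hx0 : x ≠ 0 := by
      rintro rfl
      exact hz (by simpa using cfDigit_intCast 0 0)
    have hx' : x ∈ Ioo 0 1 := ⟨hx.1.lt_of_ne' hx0, hxy.trans hy.2⟩
    have hy' : y ∈ Ioo 0 1 := ⟨hx'.1.trans hxy, hy.2⟩
    have hfloor : ⌊x⁻¹⌋ = ⌊y⁻¹⌋ := by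
      rw [← cfDigit_zero_of_mem_Ioo hx', ← cfDigit_zero_of_mem_Ioo hy', h0]
    have hT : gaussMap y < gaussMap x := by
      rw [gaussMap, gaussMap, Int.fract, Int.fract, hfloor]
      exact sub_lt_sub_right (inv_strictAnti₀ hx'.1 hxy) _
    have hdT : cfDigit (gaussMap y) k ≠ cfDigit (gaussMap x) k := by
      rwa [← Int.fract_eq_self.2 ⟨hx.1, hx'.2⟩, ← Int.fract_eq_self.2 ⟨hy.1, hy'.2⟩,
        ← cfDigit_succ, ← cfDigit_succ, ne_comm]
    have := ih (gaussMap_mem_Ico y) (gaussMap_mem_Ico x) hT hdT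
    rw [minkowski_eq_of_mem_Ioo hx', minkowski_eq_of_mem_Ioo hy', h0]
    gcongr

/-- The Minkowski question-mark function is strictly monotone increasing on `[0,1]`. -/
theorem minkowski_strictMonoOn : StrictMonoOn minkowski (Set.Icc (0 : ℝ) 1) := by
  intro x hx y hy hxy
  have hx' : x ∈ Ico 0 1 := ⟨hx.1, hxy.trans_le hy.2⟩
  rcases hy.2.eq_or_lt with rfl | hy1
  · simpa [minkowski_one] using minkowski_lt_one hx'
  have hy' : y ∈ Ico 0 1 := ⟨hx.1.trans hxy.le, hy1⟩
  obtain ⟨k, hk⟩ : ∃ k, cfDigit x k ≠ cfDigit y k := by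
    by_contra! h
    refine hxy.ne (eq_of_floor_eq_of_cfDigit_eq ?_ h)
    rw [Int.floor_eq_zero_iff.2 hx', Int.floor_eq_zero_iff.2 hy']
  exact minkowski_lt_of_cfDigit_ne k hx' hy' hxy hk
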